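/- Orthogonalization preserving the distinguishability ratio: for any two distinct density operators ρ, σ on H, there exist orthogonal density operators ρ̂, σ̂ (tr(ρ̂σ̂)=0) with rank(ρ̂) ≤ min{rank(ρ), (dim H)/2} and (1/2)‖ρ̂ − σ̂‖_M = ‖ρ − σ‖_M / ‖ρ − σ‖₁. -/

import Mathlib

open Matrix
open scoped ComplexOrder

namespace QSVQDH

variable {d : ℕ}

/-- Schatten 1-norm (trace norm). -/
noncomputable def trNorm (A : Matrix (Fin d) (Fin d) ℂ) : ℝ :=
  ((Matrix.posSemidef_conjTranspose_mul_self A).1.eigenvectorUnitary.1 *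
    diagonal (((↑) : ℝ → ℂ) ∘ (fun x : ℝ => √x) ∘ (Matrix.posSemidef_conjTranspose_mul_self A).1.eigenvalues) *
    (star (Matrix.posSemidef_conjTranspose_mul_self A).1.eigenvectorUnitary :
      Matrix (Fin d) (Fin d) ℂ)).trace.re

/-- Schatten 2-norm (Hilbert–Schmidt norm). -/
noncomputable def hsNorm (A : Matrix (Fin d) (Fin d) ℂ) : ℝ :=
  Real.sqrt ((Aᴴ * A).trace.re)

/-- Operator norm. -/
noncomputable def opNorm (A : Matrix (Fin d) (Fin d) ℂ) : ℝ :=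
  ‖Matrix.toEuclideanCLM (𝕜 := ℂ) A‖

/-- Density operator: positive semidefinite with unit trace. -/
def IsDensity (ρ : Matrix (Fin d) (Fin d) ℂ) : Prop := ρ.PosSemidef ∧ ρ.trace = 1

/-- POVM element: 0 ≤ M ≤ I. -/
def IsPOVMElem (M : Matrix (Fin d) (Fin d) ℂ) : Prop := M.PosSemidef ∧ (1 - M).PosSemidef

/-- A measurement class of binary effects: contains 0, consists of POVM elements,
is convex, and is closed under M ↦ I − M. -/
def IsMClass (Mset : Set (Matrix (Fin d) (Fin d) ℂ)) : Prop :=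
  0 ∈ Mset ∧ (∀ M ∈ Mset, IsPOVMElem M) ∧ Convex ℝ Mset ∧ (∀ M ∈ Mset, 1 - M ∈ Mset)

/-- The M-seminorm ‖Δ‖_M = sup_{M ∈ Mset} (2 tr(MΔ) − tr Δ). -/
noncomputable def Mnorm (Mset : Set (Matrix (Fin d) (Fin d) ℂ))
    (Δ : Matrix (Fin d) (Fin d) ℂ) : ℝ :=
  sSup ((fun M => 2 * (M * Δ).trace.re - Δ.trace.re) '' Mset)

/-- The ε-distinguishability ratio μ_{ρ,M}(ε). -/
noncomputable def mu (Mset : Set (Matrix (Fin d) (Fin d) ℂ))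
    (ρ : Matrix (Fin d) (Fin d) ℂ) (ε : ℝ) : ℝ :=
  (1 / (2 * ε)) *
    sInf ((fun σ => Mnorm Mset (ρ - σ)) '' {σ | IsDensity σ ∧ 2 * ε ≤ trNorm (ρ - σ)})

/-- The ε-visibility γ_{V,M}(ε), where the subspace V is given by its
orthogonal projector P. -/
noncomputable def gamma (Mset : Set (Matrix (Fin d) (Fin d) ℂ))
    (P : Matrix (Fin d) (Fin d) ℂ) (ε : ℝ) : ℝ :=
  (1 / ε) * sSup ((fun Ω =>
      sInf ((fun p : Matrix (Fin d) (Fin d) ℂ × Matrix (Fin d) (Fin d) ℂ =>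
          (Ω * (p.1 - p.2)).trace.re) ''
        {p | IsDensity p.1 ∧ P * p.1 = p.1 ∧ IsDensity p.2 ∧ (p.2 * P).trace.re ≤ 1 - ε}))
    '' Mset)

/-- The ε-visibility in its minimax (minimum) form. -/
noncomputable def gammaMin (Mset : Set (Matrix (Fin d) (Fin d) ℂ))
    (P : Matrix (Fin d) (Fin d) ℂ) (ε : ℝ) : ℝ :=
  sInf ((fun p : Matrix (Fin d) (Fin d) ℂ × Matrix (Fin d) (Fin d) ℂ =>
      (1 / (2 * ε)) * Mnorm Mset (p.1 - p.2)) ''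
    {p | IsDensity p.1 ∧ P * p.1 = p.1 ∧ IsDensity p.2 ∧ (p.2 * P).trace.re ≤ 1 - ε})

/-- μ_{ρ,M}(1), defined through perfectly distinguishable (orthogonal) counterparts. -/
noncomputable def muone (Mset : Set (Matrix (Fin d) (Fin d) ℂ))
    (ρ : Matrix (Fin d) (Fin d) ℂ) : ℝ :=
  (1 / 2) * sInf ((fun σ => Mnorm Mset (ρ - σ)) '' {σ | IsDensity σ ∧ (ρ * σ).trace = 0})

/-- The distinguishability ratio μ̂_{ρ,M}. -/
noncomputable def muhat (Mset : Set (Matrix (Fin d) (Fin d) ℂ))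
    (ρ : Matrix (Fin d) (Fin d) ℂ) : ℝ :=
  sInf ((fun σ => Mnorm Mset (ρ - σ) / trNorm (ρ - σ)) '' {σ | IsDensity σ ∧ σ ≠ ρ})

/-! Write `ρ - σ = λ (ρ̂ - σ̂)` with `ρ̂, σ̂` the positive and negative parts of `ρ - σ` normalized
to unit trace, so that `λ = ‖ρ - σ‖₁ / 2` and `ρ̂ σ̂ = 0`; positive homogeneity of `‖·‖_M` gives the
ratio. The range of `(ρ - σ)⁺` meets the kernel of `ρ` trivially, so `rank ρ̂ ≤ rank ρ`, and the
two parts have complementary supports, so `rank ρ̂ + rank σ̂ ≤ d`. If `rank ρ̂ > d / 2`, then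
`rank σ̂ < d / 2 < rank ρ`, and the swapped pair `(σ̂, ρ̂)` works since `‖-Δ‖_M = ‖Δ‖_M`. -/

section JordanDecomposition

open scoped MatrixOrder

variable {n 𝕜 : Type*} [Fintype n] [RCLike 𝕜]

lemma mulVec_eq_zero_of_add_mulVec_eq_zero {A B : Matrix n n 𝕜} (hA : A.PosSemidef)
    (hB : B.PosSemidef) {v : n → 𝕜} (h : (A + B) *ᵥ v = 0) : A *ᵥ v = 0 := by
  have hsum : star v ⬝ᵥ A *ᵥ v + star v ⬝ᵥ B *ᵥ v = 0 := by
    rw [← dotProduct_add, ← add_mulVec, h, dotProduct_zero]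
  exact (hA.dotProduct_mulVec_zero_iff v).mp <|
    ((add_eq_zero_iff_of_nonneg (hA.dotProduct_mulVec_nonneg v)
      (hB.dotProduct_mulVec_nonneg v)).mp hsum).1

lemma mulVec_eq_zero_of_mulVec_mulVec_eq_zero {A : Matrix n n 𝕜} (hA : A.IsHermitian)
    {u : n → 𝕜} (h : A *ᵥ (A *ᵥ u) = 0) : A *ᵥ u = 0 := by
  refine dotProduct_star_self_eq_zero.mp ?_
  rw [star_mulVec, ← dotProduct_mulVec, hA.eq, h, dotProduct_zero]

/-- `ρ` is injective on the range of `P`: there `N` vanishes, so `ρ v = (σ + P) v`, and the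
kernel of a sum of positive semidefinite matrices is the intersection of their kernels. -/
lemma rank_le_rank_of_add_eq_add {ρ σ P N : Matrix n n 𝕜} (hσ : σ.PosSemidef)
    (hP : P.PosSemidef) (hNP : N * P = 0) (h : ρ + N = σ + P) : P.rank ≤ ρ.rank := by
  have hdisj : Disjoint (LinearMap.range P.mulVecLin) (LinearMap.ker ρ.mulVecLin) := by
    rw [Submodule.disjoint_def]
    rintro _ ⟨u, rfl⟩ hρu
    have hNu : N *ᵥ (P *ᵥ u) = 0 := by rw [mulVec_mulVec, hNP, zero_mulVec]
    have hsum : (P + σ) *ᵥ (P *ᵥ u) = 0 := by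
      rw [add_comm, ← h, add_mulVec, hNu, add_zero]
      exact hρu
    exact mulVec_eq_zero_of_mulVec_mulVec_eq_zero hP.1
      (mulVec_eq_zero_of_add_mulVec_eq_zero hP hσ hsum)
  have := Submodule.finrank_add_finrank_le_of_disjoint hdisj
  have := LinearMap.finrank_range_add_finrank_ker ρ.mulVecLin
  rw [rank, rank]
  simp only [Module.finrank_fintype_fun_eq_card] at *
  omega

variable [DecidableEq n]

lemma rank_posPart_sub_le {ρ σ : Matrix n n 𝕜} (hρ : ρ.IsHermitian) (hσ : σ.PosSemidef) :
    (ρ - σ)⁺.rank ≤ ρ.rank := by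
  refine rank_le_rank_of_add_eq_add hσ (CFC.posPart_nonneg _).posSemidef
    (CFC.negPart_mul_posPart _) ?_
  have := CFC.posPart_sub_negPart (ρ - σ) (hρ.sub hσ.1).isSelfAdjoint
  rw [add_comm σ]
  exact (sub_eq_sub_iff_add_eq_add.mp this).symm

lemma trace_posPart_eq_trace_negPart {A : Matrix n n 𝕜} (hA : A.IsHermitian)
    (h : A.trace = 0) : A⁺.trace = A⁻.trace := by
  rw [← sub_eq_zero, ← trace_sub, CFC.posPart_sub_negPart A hA.isSelfAdjoint, h]

lemma trace_posPart_ne_zero {A : Matrix n n 𝕜} (hA : A.IsHermitian) (h : A.trace = 0)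
    (hne : A ≠ 0) : A⁺.trace ≠ 0 := by
  intro hP
  have hN : A⁻.trace = 0 := trace_posPart_eq_trace_negPart hA h ▸ hP
  apply hne
  rw [← CFC.posPart_sub_negPart A hA.isSelfAdjoint,
    (CFC.posPart_nonneg A).posSemidef.trace_eq_zero_iff.mp hP,
    (CFC.negPart_nonneg A).posSemidef.trace_eq_zero_iff.mp hN, sub_zero]

lemma trNorm_eq_re_trace_abs (A : Matrix (Fin d) (Fin d) ℂ) :
    trNorm A = (CFC.abs A).trace.re := by
  have hAA := posSemidef_conjTranspose_mul_self A
  have habs : CFC.abs A = cfc Real.sqrt (Aᴴ * A) := by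
    rw [CFC.abs, star_eq_conjTranspose, CFC.sqrt_eq_real_sqrt _ hAA.nonneg, cfcₙ_eq_cfc]
  rw [habs, hAA.1.cfc_eq, IsHermitian.cfc, Unitary.conjStarAlgAut_apply]
  rfl

lemma trNorm_nonneg (A : Matrix (Fin d) (Fin d) ℂ) : 0 ≤ trNorm A := by
  rw [trNorm_eq_re_trace_abs]
  exact (Complex.nonneg_iff.mp (CFC.abs_nonneg A).posSemidef.trace_nonneg).1

lemma trNorm_neg (A : Matrix (Fin d) (Fin d) ℂ) : trNorm (-A) = trNorm A := by
  rw [trNorm_eq_re_trace_abs, trNorm_eq_re_trace_abs, CFC.abs_neg]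

lemma trNorm_eq_two_mul_re_trace_posPart {A : Matrix (Fin d) (Fin d) ℂ} (hA : A.IsHermitian)
    (h : A.trace = 0) : trNorm A = 2 * A⁺.trace.re := by
  rw [trNorm_eq_re_trace_abs, ← CFC.posPart_add_negPart A hA.isSelfAdjoint, trace_add,
    ← trace_posPart_eq_trace_negPart hA h, Complex.add_re]
  ring

/-- The positive part of `Δ` rescaled by `λ⁻¹`, where `λ = ‖Δ‖₁ / 2`; for `Δ = ρ - σ` this is the
state `ρ̂`, and `normalizedPosPart (-Δ)` is `σ̂`. -/
noncomputable def normalizedPosPart (Δ : Matrix (Fin d) (Fin d) ℂ) : Matrix (Fin d) (Fin d) ℂ :=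
  ((2 / trNorm Δ : ℝ) : ℂ) • Δ⁺

lemma normalizedPosPart_sub_normalizedPosPart_neg {Δ : Matrix (Fin d) (Fin d) ℂ}
    (hΔ : Δ.IsHermitian) :
    normalizedPosPart Δ - normalizedPosPart (-Δ) = ((2 / trNorm Δ : ℝ) : ℂ) • Δ := by
  rw [normalizedPosPart, normalizedPosPart, trNorm_neg, CFC.posPart_neg, ← smul_sub,
    CFC.posPart_sub_negPart Δ hΔ.isSelfAdjoint]

lemma normalizedPosPart_mul_normalizedPosPart_neg (Δ : Matrix (Fin d) (Fin d) ℂ) :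
    normalizedPosPart Δ * normalizedPosPart (-Δ) = 0 := by
  rw [normalizedPosPart, normalizedPosPart, CFC.posPart_neg, smul_mul_smul_comm,
    CFC.posPart_mul_negPart, smul_zero]

lemma isDensity_normalizedPosPart {Δ : Matrix (Fin d) (Fin d) ℂ} (hΔ : Δ.IsHermitian)
    (h : Δ.trace = 0) (hne : Δ ≠ 0) : IsDensity (normalizedPosPart Δ) := by
  have hP := (CFC.posPart_nonneg Δ).posSemidef
  obtain ⟨r, hr⟩ : ∃ r : ℝ, Δ⁺.trace = r :=
    ⟨_, Complex.eq_re_of_ofReal_le (r := 0) (by rw [Complex.ofReal_zero]; exact hP.trace_nonneg)⟩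
  have hr0 : r ≠ 0 := fun h0 => trace_posPart_ne_zero hΔ h hne (by rw [hr, h0, Complex.ofReal_zero])
  refine ⟨hP.smul (Complex.zero_le_real.mpr (div_nonneg zero_le_two (trNorm_nonneg Δ))), ?_⟩
  rw [normalizedPosPart, trace_smul, trNorm_eq_two_mul_re_trace_posPart hΔ h, hr,
    Complex.ofReal_re, smul_eq_mul, ← Complex.ofReal_mul, div_mul_eq_mul_div,
    mul_div_mul_left _ _ two_ne_zero, div_self hr0, Complex.ofReal_one]

lemma rank_normalizedPosPart_sub_le {ρ σ : Matrix (Fin d) (Fin d) ℂ} (hρ : ρ.IsHermitian)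
    (hσ : σ.PosSemidef) : (normalizedPosPart (ρ - σ)).rank ≤ ρ.rank := by
  rw [normalizedPosPart, smul_eq_diagonal_mul]
  exact (rank_mul_le_right _ _).trans (rank_posPart_sub_le hρ hσ)

end JordanDecomposition

lemma Mnorm_ofReal_smul (Mset : Set (Matrix (Fin d) (Fin d) ℂ)) (Δ : Matrix (Fin d) (Fin d) ℂ)
    {c : ℝ} (hc : 0 ≤ c) : Mnorm Mset ((c : ℂ) • Δ) = c * Mnorm Mset Δ := by
  rw [Mnorm, Mnorm, ← smul_eq_mul, ← Real.sSup_smul_of_nonneg hc, ← Set.image_smul,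
    Set.image_image]
  congr 1
  refine Set.image_congr fun M _ => ?_
  simp only [mul_smul_comm, trace_smul, smul_eq_mul, Complex.re_ofReal_mul]
  ring

/-- Replacing the effect `M` by `1 - M` flips the sign of the objective. -/
lemma Mnorm_neg {Mset : Set (Matrix (Fin d) (Fin d) ℂ)} (hM : ∀ M ∈ Mset, 1 - M ∈ Mset)
    (Δ : Matrix (Fin d) (Fin d) ℂ) : Mnorm Mset (-Δ) = Mnorm Mset Δ := by
  have key : ∀ Δ : Matrix (Fin d) (Fin d) ℂ,
      (fun M => 2 * (M * -Δ).trace.re - (-Δ).trace.re) '' Mset ⊆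
        (fun M => 2 * (M * Δ).trace.re - Δ.trace.re) '' Mset := by
    rintro Δ _ ⟨M, hMm, rfl⟩
    refine ⟨1 - M, hM M hMm, ?_⟩
    simp only [sub_mul, one_mul, mul_neg, trace_sub, trace_neg, Complex.sub_re, Complex.neg_re]
    ring
  rw [Mnorm, Mnorm, (key Δ).antisymm (by simpa using key (-Δ))]

lemma Mnorm_normalizedPosPart_sub (Mset : Set (Matrix (Fin d) (Fin d) ℂ))
    {Δ : Matrix (Fin d) (Fin d) ℂ} (hΔ : Δ.IsHermitian) :
    (1 / 2) * Mnorm Mset (normalizedPosPart Δ - normalizedPosPart (-Δ)) =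
      Mnorm Mset Δ / trNorm Δ := by
  rw [normalizedPosPart_sub_normalizedPosPart_neg hΔ,
    Mnorm_ofReal_smul _ _ (div_nonneg zero_le_two (trNorm_nonneg Δ))]
  ring

lemma natCast_le_min_half {r R m : ℕ} (hR : r ≤ R) (hm : 2 * r ≤ m) :
    (r : ℝ) ≤ min (R : ℝ) ((m : ℝ) / 2) := by
  refine le_min (by exact_mod_cast hR) ?_
  rw [le_div_iff₀ two_pos, mul_comm]
  exact_mod_cast hm

/-- Theorem 2, first part: orthogonalization preserving the
distinguishability ratio, with rank control. -/
theorem orthogonalization (Mset : Set (Matrix (Fin d) (Fin d) ℂ)) (hM : IsMClass Mset)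
    (ρ σ : Matrix (Fin d) (Fin d) ℂ) (hρ : IsDensity ρ) (hσ : IsDensity σ) (hne : ρ ≠ σ) :
    ∃ ρ' σ' : Matrix (Fin d) (Fin d) ℂ, IsDensity ρ' ∧ IsDensity σ' ∧
      (ρ' * σ').trace = 0 ∧
      (ρ'.rank : ℝ) ≤ min (ρ.rank : ℝ) ((d : ℝ) / 2) ∧
      (1 / 2) * Mnorm Mset (ρ' - σ') = Mnorm Mset (ρ - σ) / trNorm (ρ - σ) := by
  set Δ := ρ - σ
  have hΔ : Δ.IsHermitian := hρ.1.1.sub hσ.1.1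
  have htr : Δ.trace = 0 := by rw [trace_sub, hρ.2, hσ.2, sub_self]
  have hΔne : Δ ≠ 0 := sub_ne_zero.mpr hne
  have hpos := isDensity_normalizedPosPart hΔ htr hΔne
  have hneg := isDensity_normalizedPosPart hΔ.neg (by rw [trace_neg, htr, neg_zero])
    (neg_ne_zero.mpr hΔne)
  have hmul := normalizedPosPart_mul_normalizedPosPart_neg Δ
  have hmul' : normalizedPosPart (-Δ) * normalizedPosPart Δ = 0 := by
    simpa using normalizedPosPart_mul_normalizedPosPart_neg (-Δ)
  have hrank : (normalizedPosPart Δ).rank + (normalizedPosPart (-Δ)).rank ≤ d := by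
    simpa using rank_add_rank_le_card_of_mul_eq_zero hmul
  have hrankρ : (normalizedPosPart Δ).rank ≤ ρ.rank := rank_normalizedPosPart_sub_le hρ.1.1 hσ.1
  by_cases hhalf : 2 * (normalizedPosPart Δ).rank ≤ d
  · exact ⟨_, _, hpos, hneg, by rw [hmul, trace_zero], natCast_le_min_half hrankρ hhalf,
      Mnorm_normalizedPosPart_sub Mset hΔ⟩
  · refine ⟨_, _, hneg, hpos, by rw [hmul', trace_zero],
      natCast_le_min_half (by omega) (by omega), ?_⟩
    rw [← neg_sub, Mnorm_neg hM.2.2.2, Mnorm_normalizedPosPart_sub Mset hΔ]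

end QSVQDH
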